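/- arXiv:2310.19278 — 5 statements merged into one kernel-verified Lean document; each statement's English description precedes it below -/
import Mathlib

section
/- For every ξ ∈ (−1/8, 0), the function θ₁₂(x) = √3·(x − 1/x)·(ξ − 1/((x − 1/x)² + 1)) on ℝ∖{0} has derivative equal to zero at each of the eight points ±p₀(ξ), ±1/p₀(ξ), ±p₁(ξ), ±1/p₁(ξ), where pᵢ(ξ) = (√(κᵢ(ξ)² + 4) − κᵢ(ξ))/2. In particular, pᵢ(ξ) − 1/pᵢ(ξ) = −κᵢ(ξ) for i = 0, 1. -/
/-!
Writing `u = x - 1/x`, the phase is `√3 · g(u)` with `g(u) = u (ξ - 1/(u² + 1))`, and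
`g'(u) = (ξ (u² + 1)² + u² - 1) / (u² + 1)²` depends on `u²` only. The numerator is a quadratic in
`u²` whose two roots are `κ₀²` and `κ₁²`, and each of the four points `±p, ±1/p` satisfies
`(x - 1/x)² = (p - 1/p)² = κ²`, so the chain rule gives a zero derivative there.
-/

open Real

noncomputable section

def rationalPhase (ξ u : ℝ) : ℝ := u * (ξ - 1 / (u ^ 2 + 1))

def theta12 (ξ y : ℝ) : ℝ := √3 * (y - 1 / y) * (ξ - 1 / ((y - 1 / y) ^ 2 + 1))

end

theorem hasDerivAt_rationalPhase (ξ u : ℝ) :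
    HasDerivAt (rationalPhase ξ) ((ξ * (u ^ 2 + 1) ^ 2 + u ^ 2 - 1) / (u ^ 2 + 1) ^ 2) u := by
  have hu : u ^ 2 + 1 ≠ 0 := by positivity
  have hsq : HasDerivAt (fun v : ℝ => v ^ 2 + 1) (2 * u) u := by
    simpa using (hasDerivAt_pow 2 u).add_const 1
  have hrec := (hasDerivAt_const u ξ).fun_sub (hsq.fun_inv hu)
  have hphase : rationalPhase ξ = fun v => v * (ξ - (v ^ 2 + 1)⁻¹) := by
    ext v
    simp only [rationalPhase, one_div]
  rw [hphase]
  refine ((hasDerivAt_id' u).fun_mul hrec).congr_deriv ?_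
  field_simp
  ring

theorem hasDerivAt_sub_one_div {x : ℝ} (hx : x ≠ 0) :
    HasDerivAt (fun y : ℝ => y - 1 / y) (1 + 1 / x ^ 2) x := by
  simp only [one_div]
  exact ((hasDerivAt_id' x).fun_sub (hasDerivAt_inv hx)).congr_deriv (sub_neg_eq_add _ _)

theorem theta12_eq_comp (ξ : ℝ) :
    theta12 ξ = fun y => √3 * rationalPhase ξ (y - 1 / y) := by
  ext y
  simp only [theta12, rationalPhase]
  ring

theorem hasDerivAt_theta12_zero {ξ x : ℝ} (hx : x ≠ 0)
    (hcrit : ξ * ((x - 1 / x) ^ 2 + 1) ^ 2 + (x - 1 / x) ^ 2 - 1 = 0) :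
    HasDerivAt (theta12 ξ) 0 x := by
  have hcomp := ((hasDerivAt_rationalPhase ξ (x - 1 / x)).comp x
    (hasDerivAt_sub_one_div hx)).const_mul √3
  rw [hcrit, zero_div, zero_mul, mul_zero] at hcomp
  rwa [theta12_eq_comp]

theorem sq_sub_one_div_eq_of_mem {p x : ℝ} (hx : x ∈ ({p, -p, 1 / p, -(1 / p)} : Set ℝ)) :
    (x - 1 / x) ^ 2 = (p - 1 / p) ^ 2 := by
  simp only [Set.mem_insert_iff, Set.mem_singleton_iff] at hx
  rcases hx with rfl | rfl | rfl | rfl <;> simp only [one_div, inv_neg, inv_inv] <;> ring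

theorem ne_zero_of_mem {p x : ℝ} (hp : p ≠ 0) (hx : x ∈ ({p, -p, 1 / p, -(1 / p)} : Set ℝ)) :
    x ≠ 0 := by
  simp only [Set.mem_insert_iff, Set.mem_singleton_iff] at hx
  rcases hx with rfl | rfl | rfl | rfl <;> simpa using hp

theorem hasDerivAt_theta12_zero_of_mem {ξ κ p x : ℝ} (hp : p ≠ 0) (hpκ : p - 1 / p = -κ)
    (hκ : ξ * (κ ^ 2 + 1) ^ 2 + κ ^ 2 - 1 = 0)
    (hx : x ∈ ({p, -p, 1 / p, -(1 / p)} : Set ℝ)) :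
    HasDerivAt (theta12 ξ) 0 x := by
  refine hasDerivAt_theta12_zero (ne_zero_of_mem hp hx) ?_
  rwa [sq_sub_one_div_eq_of_mem hx, hpκ, neg_sq]

section RootOfSubInv

variable (κ : ℝ)

theorem sqrt_sq_add_four_sub_div_two_pos : 0 < (√(κ ^ 2 + 4) - κ) / 2 := by
  have : |κ| < √(κ ^ 2 + 4) := by
    rw [← sqrt_sq_eq_abs]
    exact sqrt_lt_sqrt (sq_nonneg κ) (by linarith)
  linarith [le_abs_self κ]

/-- `p = (√(κ² + 4) - κ) / 2` is the positive root of `p² + κ p - 1 = 0`. -/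
theorem sqrt_sq_add_four_sub_div_two_sub_one_div :
    (√(κ ^ 2 + 4) - κ) / 2 - 1 / ((√(κ ^ 2 + 4) - κ) / 2) = -κ := by
  set p := (√(κ ^ 2 + 4) - κ) / 2 with hp_def
  have hp : p ≠ 0 := (sqrt_sq_add_four_sub_div_two_pos κ).ne'
  have hs : √(κ ^ 2 + 4) ^ 2 = κ ^ 2 + 4 := sq_sqrt (by positivity)
  have hroot : p ^ 2 + κ * p - 1 = 0 := by
    rw [hp_def]
    linear_combination hs / 4
  field_simp
  linear_combination hroot

end RootOfSubInv

section CriticalLevels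

variable {ξ t : ℝ}

/-- The numerator of `g'`, as a quadratic `ξ t² + (2ξ + 1) t + (ξ - 1)` in `t = u²`, has
discriminant `1 + 8ξ`. -/
theorem critical_of_eq_root (hξ : ξ ≠ 0) (hd : 0 ≤ 1 + 8 * ξ)
    (ht : t = (√(1 + 8 * ξ) - 1 - 2 * ξ) / (2 * ξ) ∨ t = -(√(1 + 8 * ξ) + 1 + 2 * ξ) / (2 * ξ)) :
    ξ * (t + 1) ^ 2 + t - 1 = 0 := by
  have hdisc : discrim ξ (2 * ξ + 1) (ξ - 1) = √(1 + 8 * ξ) * √(1 + 8 * ξ) := by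
    rw [mul_self_sqrt hd, discrim]
    ring
  have hroot := (quadratic_eq_zero_iff hξ hdisc t).mpr
    (by rcases ht with rfl | rfl <;> [left; right] <;> ring)
  linear_combination hroot

theorem nonneg_of_eq_root (hξ : ξ ∈ Set.Ioo (-(1 : ℝ) / 8) 0)
    (ht : t = (√(1 + 8 * ξ) - 1 - 2 * ξ) / (2 * ξ) ∨ t = -(√(1 + 8 * ξ) + 1 + 2 * ξ) / (2 * ξ)) :
    0 ≤ t := by
  obtain ⟨hξ₁, hξ₂⟩ := hξ
  have hs := sqrt_nonneg (1 + 8 * ξ)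
  have hle : √(1 + 8 * ξ) ≤ 1 + 2 * ξ := by
    rw [sqrt_le_left (by linarith)]
    nlinarith
  rcases ht with rfl | rfl <;> exact div_nonneg_of_nonpos (by linarith) (by linarith)

theorem critical_sqrt_of_eq_root (hξ : ξ ∈ Set.Ioo (-(1 : ℝ) / 8) 0)
    (ht : t = (√(1 + 8 * ξ) - 1 - 2 * ξ) / (2 * ξ) ∨ t = -(√(1 + 8 * ξ) + 1 + 2 * ξ) / (2 * ξ)) :
    ξ * (√t ^ 2 + 1) ^ 2 + √t ^ 2 - 1 = 0 := by
  rw [sq_sqrt (nonneg_of_eq_root hξ ht)]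
  exact critical_of_eq_root hξ.2.ne (by linarith [hξ.1]) ht

end CriticalLevels

/-- For every `ξ ∈ (−1/8, 0)`, the function
`θ₁₂(x) = √3·(x − 1/x)·(ξ − 1/((x − 1/x)² + 1))` on `ℝ∖{0}` has derivative zero at each of
the eight points `±p₀(ξ), ±1/p₀(ξ), ±p₁(ξ), ±1/p₁(ξ)`, where
`pᵢ(ξ) = (√(κᵢ(ξ)² + 4) − κᵢ(ξ))/2`.  In particular, `pᵢ(ξ) − 1/pᵢ(ξ) = −κᵢ(ξ)` for `i = 0,1`. -/
theorem saddle_points_critical (ξ : ℝ) (hξ : ξ ∈ Set.Ioo (-(1:ℝ)/8) 0) :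
    let κ₀ : ℝ := Real.sqrt ((Real.sqrt (1 + 8*ξ) - 1 - 2*ξ) / (2*ξ))
    let κ₁ : ℝ := Real.sqrt (-(Real.sqrt (1 + 8*ξ) + 1 + 2*ξ) / (2*ξ))
    let p₀ : ℝ := (Real.sqrt (κ₀^2 + 4) - κ₀) / 2
    let p₁ : ℝ := (Real.sqrt (κ₁^2 + 4) - κ₁) / 2
    (∀ x ∈ ({p₀, -p₀, 1/p₀, -(1/p₀), p₁, -p₁, 1/p₁, -(1/p₁)} : Set ℝ),
      HasDerivAt (fun y : ℝ => Real.sqrt 3 * (y - 1 / y) * (ξ - 1 / ((y - 1 / y) ^ 2 + 1)))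
        0 x) ∧
    p₀ - 1/p₀ = -κ₀ ∧ p₁ - 1/p₁ = -κ₁ := by
  intro κ₀ κ₁ p₀ p₁
  have hp₀ : p₀ - 1 / p₀ = -κ₀ := sqrt_sq_add_four_sub_div_two_sub_one_div κ₀
  have hp₁ : p₁ - 1 / p₁ = -κ₁ := sqrt_sq_add_four_sub_div_two_sub_one_div κ₁
  refine ⟨fun x hx => ?_, hp₀, hp₁⟩
  obtain hx | hx : x ∈ ({p₀, -p₀, 1 / p₀, -(1 / p₀)} : Set ℝ) ∨
      x ∈ ({p₁, -p₁, 1 / p₁, -(1 / p₁)} : Set ℝ) := by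
    simp only [Set.mem_insert_iff, Set.mem_singleton_iff] at hx ⊢
    tauto
  · exact hasDerivAt_theta12_zero_of_mem (sqrt_sq_add_four_sub_div_two_pos κ₀).ne' hp₀
      (critical_sqrt_of_eq_root hξ (Or.inl rfl)) hx
  · exact hasDerivAt_theta12_zero_of_mem (sqrt_sq_add_four_sub_div_two_pos κ₁).ne' hp₁
      (critical_sqrt_of_eq_root hξ (Or.inr rfl)) hx
end

section
/- For every ξ ∈ (−1/8, 0), the saddle points satisfy the ordering 0 < p₁(ξ) < p₀(ξ) < 1 < 1/p₀(ξ) < 1/p₁(ξ). -/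
open Real

private lemma p_pos_aux {κ : ℝ} (hκ : 0 ≤ κ) : 0 < (Real.sqrt (κ^2 + 4) - κ) / 2 := by
  have h : κ < Real.sqrt (κ^2 + 4) := by
    rw [show κ = Real.sqrt (κ^2) by rw [Real.sqrt_sq hκ]]
    exact Real.sqrt_lt_sqrt (sq_nonneg κ) (by nlinarith [Real.sq_sqrt (sq_nonneg κ), Real.sqrt_sq hκ])
  linarith

private lemma p_lt_one_aux {κ : ℝ} (hκ : 0 < κ) : (Real.sqrt (κ^2 + 4) - κ) / 2 < 1 := by
  have h : Real.sqrt (κ^2 + 4) < κ + 2 := by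
    rw [show κ + 2 = Real.sqrt ((κ+2)^2) by rw [Real.sqrt_sq (by linarith)]]
    exact Real.sqrt_lt_sqrt (by positivity) (by nlinarith)
  linarith

private lemma p_mono_aux {a b : ℝ} (ha : 0 ≤ a) (hab : a < b) :
    (Real.sqrt (b^2 + 4) - b) / 2 < (Real.sqrt (a^2 + 4) - a) / 2 := by
  set u := Real.sqrt (a^2 + 4) with hu
  set v := Real.sqrt (b^2 + 4) with hv
  have hu2 : u^2 = a^2 + 4 := Real.sq_sqrt (by positivity)
  have hv2 : v^2 = b^2 + 4 := Real.sq_sqrt (by positivity)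
  have hua : a < u := by
    have := p_pos_aux ha; linarith
  have hvb : b < v := by
    have := p_pos_aux (le_of_lt (lt_of_le_of_lt ha hab)); linarith
  nlinarith [mul_pos (show (0:ℝ) < v - b by linarith) (show (0:ℝ) < (v + b) - (u + a) by nlinarith)]

/-- For every `ξ ∈ (−1/8, 0)`, the saddle points satisfy the ordering
`0 < p₁(ξ) < p₀(ξ) < 1 < 1/p₀(ξ) < 1/p₁(ξ)`. -/
theorem saddle_points_ordering (ξ : ℝ) (hξ : ξ ∈ Set.Ioo (-(1:ℝ)/8) 0) :
    let κ₀ : ℝ := Real.sqrt ((Real.sqrt (1 + 8*ξ) - 1 - 2*ξ) / (2*ξ))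
    let κ₁ : ℝ := Real.sqrt (-(Real.sqrt (1 + 8*ξ) + 1 + 2*ξ) / (2*ξ))
    let p₀ : ℝ := (Real.sqrt (κ₀^2 + 4) - κ₀) / 2
    let p₁ : ℝ := (Real.sqrt (κ₁^2 + 4) - κ₁) / 2
    0 < p₁ ∧ p₁ < p₀ ∧ p₀ < 1 ∧ 1 < 1/p₀ ∧ 1/p₀ < 1/p₁ := by
  obtain ⟨hξ1, hξ2⟩ := hξ
  intro κ₀ κ₁ p₀ p₁
  set s := Real.sqrt (1 + 8*ξ) with hs
  have hsnn : 0 ≤ s := Real.sqrt_nonneg _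
  have hs2 : s^2 = 1 + 8*ξ := Real.sq_sqrt (by linarith)
  have hs0 : 0 < s := Real.sqrt_pos.mpr (by linarith)
  have hs1 : s < 1 := by
    have : s^2 < 1^2 := by nlinarith
    nlinarith
  have hξne : (2*ξ) ≠ 0 := by intro h; nlinarith
  have harg0 : (s - 1 - 2*ξ) / (2*ξ) = (3 - s) / (1 + s) := by
    rw [div_eq_div_iff hξne (ne_of_gt (by linarith : (0:ℝ) < 1 + s))]
    linear_combination hs2
  have harg1 : -(s + 1 + 2*ξ) / (2*ξ) = (3 + s) / (1 - s) := by
    rw [div_eq_div_iff hξne (ne_of_gt (by linarith : (0:ℝ) < 1 - s))]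
    linear_combination hs2
  have hκ0 : (1:ℝ) < κ₀ := by
    show (1:ℝ) < Real.sqrt ((s - 1 - 2*ξ) / (2*ξ))
    rw [harg0]
    rw [show (1:ℝ) = Real.sqrt 1 from (Real.sqrt_one).symm]
    apply Real.sqrt_lt_sqrt (by norm_num)
    rw [Real.sqrt_one, lt_div_iff₀ (by linarith)]; linarith
  have hκ01 : κ₀ < κ₁ := by
    show Real.sqrt ((s - 1 - 2*ξ) / (2*ξ)) < Real.sqrt (-(s + 1 + 2*ξ) / (2*ξ))
    rw [harg0, harg1]
    apply Real.sqrt_lt_sqrt (div_nonneg (by linarith) (by linarith))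
    rw [div_lt_div_iff₀ (by linarith) (by linarith)]
    nlinarith
  have hκ0nn : 0 ≤ κ₀ := by linarith
  have hκ1nn : 0 ≤ κ₁ := by linarith
  have hp1pos : 0 < p₁ := p_pos_aux hκ1nn
  have hp10 : p₁ < p₀ := p_mono_aux hκ0nn hκ01
  have hp0lt1 : p₀ < 1 := p_lt_one_aux (by linarith)
  refine ⟨hp1pos, hp10, hp0lt1, ?_, ?_⟩
  · rw [lt_div_iff₀ (by linarith)]; linarith
  · exact one_div_lt_one_div_of_lt hp1pos hp10
end

section
/- Let ξ = −1/8 and define θ(x) = √3·(x − 1/x)·(−1/8 − 1/((x − 1/x)² + 1)) for real x ≠ 0. Then at z_a = (√7 + √3)/2 one has θ′(z_a) = 0, θ″(z_a) = 0 and θ‴(z_a) = −16·c_a with c_a = (21/256)(14√3 − 9√7); and at z_b = (√7 − √3)/2 one has θ′(z_b) = 0, θ″(z_b) = 0 and θ‴(z_b) = −16·c_b with c_b = (21/256)(14√3 + 9√7). -/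
/-!
Write `θ = Φ_ξ ∘ g` with `g x = x - 1/x` and `Φ_ξ u = √3 u (ξ - 1/(u² + 1))`. By the chain rule
to third order, `θ'`, `θ''` vanish wherever `Φ_ξ'` and `Φ_ξ''` vanish at `g z`, and there
`θ''' = Φ_ξ'''(g z) · g'(z)³`. For `ξ = -1/8` both `Φ_ξ'` and `Φ_ξ''` vanish at `u = ±√3`, and
`z = (√7 ± √3)/2` are exactly the points with `g z = ±√3`, since `1/z = (√7 ∓ √3)/2`.
-/

open Real

noncomputable section

section ChainRule

variable {𝕜 : Type*} [NontriviallyNormedField 𝕜]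
  {F F₁ F₂ F₃ g g₁ g₂ g₃ : 𝕜 → 𝕜} {s : Set 𝕜}

theorem hasDerivAt_comp_second (hF₁ : ∀ u, HasDerivAt F₁ (F₂ u) u)
    {x : 𝕜} (hg : HasDerivAt g (g₁ x) x) (hg₁ : HasDerivAt g₁ (g₂ x) x) :
    HasDerivAt (fun y => F₁ (g y) * g₁ y) (F₂ (g x) * g₁ x ^ 2 + F₁ (g x) * g₂ x) x := by
  refine (((hF₁ (g x)).comp x hg).mul hg₁).congr_deriv ?_
  simp only [Function.comp_apply]
  ring

theorem hasDerivAt_comp_third (hF₁ : ∀ u, HasDerivAt F₁ (F₂ u) u)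
    (hF₂ : ∀ u, HasDerivAt F₂ (F₃ u) u) {x : 𝕜} (hg : HasDerivAt g (g₁ x) x)
    (hg₁ : HasDerivAt g₁ (g₂ x) x) (hg₂ : HasDerivAt g₂ (g₃ x) x) :
    HasDerivAt (fun y => F₂ (g y) * g₁ y ^ 2 + F₁ (g y) * g₂ y)
      (F₃ (g x) * g₁ x ^ 3 + 3 * F₂ (g x) * g₁ x * g₂ x + F₁ (g x) * g₃ x) x := by
  refine ((((hF₂ (g x)).comp x hg).mul (hg₁.pow 2)).add
    (((hF₁ (g x)).comp x hg).mul hg₂)).congr_deriv ?_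
  simp only [Function.comp_apply, Pi.pow_apply]
  push_cast
  ring

/-- Faà di Bruno's formula to third order. -/
theorem iterate_deriv_comp_three (hs : IsOpen s) (hF : ∀ u, HasDerivAt F (F₁ u) u)
    (hF₁ : ∀ u, HasDerivAt F₁ (F₂ u) u) (hF₂ : ∀ u, HasDerivAt F₂ (F₃ u) u)
    (hg : ∀ x ∈ s, HasDerivAt g (g₁ x) x) (hg₁ : ∀ x ∈ s, HasDerivAt g₁ (g₂ x) x)
    (hg₂ : ∀ x ∈ s, HasDerivAt g₂ (g₃ x) x) {z : 𝕜} (hz : z ∈ s) :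
    deriv (F ∘ g) z = F₁ (g z) * g₁ z ∧
      deriv (deriv (F ∘ g)) z = F₂ (g z) * g₁ z ^ 2 + F₁ (g z) * g₂ z ∧
      deriv (deriv (deriv (F ∘ g))) z =
        F₃ (g z) * g₁ z ^ 3 + 3 * F₂ (g z) * g₁ z * g₂ z + F₁ (g z) * g₃ z := by
  have hs_nhds : s ∈ nhds z := hs.mem_nhds hz
  have hd₁ : ∀ x ∈ s, HasDerivAt (F ∘ g) (F₁ (g x) * g₁ x) x := fun x hx =>
    (hF (g x)).comp x (hg x hx)
  have hd₂ : ∀ x ∈ s, HasDerivAt (fun y => F₁ (g y) * g₁ y)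
      (F₂ (g x) * g₁ x ^ 2 + F₁ (g x) * g₂ x) x := fun x hx =>
    hasDerivAt_comp_second hF₁ (hg x hx) (hg₁ x hx)
  have e₁ : deriv (F ∘ g) =ᶠ[nhds z] fun y => F₁ (g y) * g₁ y :=
    Filter.eventuallyEq_of_mem hs_nhds fun x hx => (hd₁ x hx).deriv
  have e₂ : deriv (deriv (F ∘ g)) =ᶠ[nhds z]
      fun y => F₂ (g y) * g₁ y ^ 2 + F₁ (g y) * g₂ y :=
    e₁.deriv.trans (Filter.eventuallyEq_of_mem hs_nhds fun x hx => (hd₂ x hx).deriv)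
  refine ⟨(hd₁ z hz).deriv, ?_, ?_⟩
  · rw [e₁.deriv_eq]
    exact (hd₂ z hz).deriv
  · rw [e₂.deriv_eq]
    exact (hasDerivAt_comp_third hF₁ hF₂ (hg z hz) (hg₁ z hz) (hg₂ z hz)).deriv

end ChainRule

/-- The phase function `θ₁₂` as a function of `u = z - 1/z`. -/
def phase (ξ u : ℝ) : ℝ := √3 * u * (ξ - 1 / (u ^ 2 + 1))

def phaseDeriv (ξ u : ℝ) : ℝ := √3 * (ξ - (1 - u ^ 2) / (u ^ 2 + 1) ^ 2)

def phaseDeriv2 (u : ℝ) : ℝ := -√3 * (2 * u * (u ^ 2 - 3)) / (u ^ 2 + 1) ^ 3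

def phaseDeriv3 (u : ℝ) : ℝ :=
  -√3 * ((6 * u ^ 2 - 6) * (u ^ 2 + 1) - 12 * u ^ 2 * (u ^ 2 - 3)) / (u ^ 2 + 1) ^ 4

theorem hasDerivAt_phase (ξ u : ℝ) : HasDerivAt (phase ξ) (phaseDeriv ξ u) u := by
  have hden : u ^ 2 + 1 ≠ 0 := by positivity
  refine (((hasDerivAt_id u).const_mul √3).mul
    ((hasDerivAt_const u ξ).sub ((hasDerivAt_const u 1).div
      ((hasDerivAt_pow 2 u).add_const 1) hden))).congr_deriv ?_
  simp only [phaseDeriv, id, Pi.sub_apply, Pi.div_apply]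
  field_simp
  ring

theorem hasDerivAt_phaseDeriv (ξ u : ℝ) : HasDerivAt (phaseDeriv ξ) (phaseDeriv2 u) u := by
  have hden : (u ^ 2 + 1) ^ 2 ≠ 0 := by positivity
  refine (((hasDerivAt_const u ξ).sub (((hasDerivAt_pow 2 u).const_sub 1).div
    (((hasDerivAt_pow 2 u).add_const 1).pow 2) hden)).const_mul √3).congr_deriv ?_
  simp only [phaseDeriv2, Pi.pow_apply]
  field_simp
  ring

theorem hasDerivAt_phaseDeriv2 (u : ℝ) : HasDerivAt phaseDeriv2 (phaseDeriv3 u) u := by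
  have hden : (u ^ 2 + 1) ^ 3 ≠ 0 := by positivity
  refine (((((hasDerivAt_id u).const_mul 2).mul ((hasDerivAt_pow 2 u).sub_const 3)).const_mul
    (-√3)).div (((hasDerivAt_pow 2 u).add_const 1).pow 3) hden).congr_deriv ?_
  simp only [phaseDeriv3, id, Pi.pow_apply, Pi.mul_apply]
  field_simp
  ring

theorem phaseDeriv_neg_one_div_eight_eq_zero {u : ℝ} (hu : u ^ 2 = 3) :
    phaseDeriv (-1 / 8) u = 0 := by
  norm_num [phaseDeriv, hu]

theorem phaseDeriv2_eq_zero_of_sq_eq_three {u : ℝ} (hu : u ^ 2 = 3) : phaseDeriv2 u = 0 := by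
  simp [phaseDeriv2, hu]

theorem phaseDeriv3_of_sq_eq_three {u : ℝ} (hu : u ^ 2 = 3) :
    phaseDeriv3 u = -(3 * √3 / 16) := by
  norm_num [phaseDeriv3, hu]
  ring

theorem hasDerivAt_sub_inv {x : ℝ} (hx : x ≠ 0) :
    HasDerivAt (fun y => y - 1 / y) (1 + 1 / x ^ 2) x := by
  refine ((hasDerivAt_id x).sub ((hasDerivAt_const x 1).div (hasDerivAt_id x) hx)).congr_deriv ?_
  simp only [id]
  ring

theorem hasDerivAt_one_add_one_div_sq {x : ℝ} (hx : x ≠ 0) :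
    HasDerivAt (fun y => 1 + 1 / y ^ 2) (-2 / x ^ 3) x := by
  refine ((hasDerivAt_const x 1).add
    ((hasDerivAt_const x 1).div (hasDerivAt_pow 2 x) (pow_ne_zero 2 hx))).congr_deriv ?_
  field_simp
  ring

theorem hasDerivAt_neg_two_div_cube {x : ℝ} (hx : x ≠ 0) :
    HasDerivAt (fun y => -2 / y ^ 3) (6 / x ^ 4) x := by
  refine ((hasDerivAt_const x (-2)).div (hasDerivAt_pow 3 x) (pow_ne_zero 3 hx)).congr_deriv ?_
  field_simp
  ring

theorem deriv_phase_comp_sub_inv (ξ : ℝ) {z : ℝ} (hz : z ≠ 0) :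
    let θ := phase ξ ∘ fun x => x - 1 / x
    let u := z - 1 / z
    deriv θ z = phaseDeriv ξ u * (1 + 1 / z ^ 2) ∧
      deriv (deriv θ) z = phaseDeriv2 u * (1 + 1 / z ^ 2) ^ 2 + phaseDeriv ξ u * (-2 / z ^ 3) ∧
      deriv (deriv (deriv θ)) z = phaseDeriv3 u * (1 + 1 / z ^ 2) ^ 3 +
        3 * phaseDeriv2 u * (1 + 1 / z ^ 2) * (-2 / z ^ 3) + phaseDeriv ξ u * (6 / z ^ 4) :=
  iterate_deriv_comp_three isOpen_ne (hasDerivAt_phase ξ) (hasDerivAt_phaseDeriv ξ)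
    hasDerivAt_phaseDeriv2 (fun _ hx => hasDerivAt_sub_inv hx)
    (fun _ hx => hasDerivAt_one_add_one_div_sq hx) (fun _ hx => hasDerivAt_neg_two_div_cube hx)
    hz

theorem deriv_phase_at_degenerate_saddle {u : ℝ} (hu : u ^ 2 = 3) :
    let θ := phase (-1 / 8) ∘ fun x => x - 1 / x
    let z := (√7 + u) / 2
    deriv θ z = 0 ∧ deriv (deriv θ) z = 0 ∧
      deriv (deriv (deriv θ)) z = -(3 * √3 / 16) * (98 - 21 * (u * √7)) := by
  intro θ z
  have h7 : √7 ^ 2 = 7 := sq_sqrt (by norm_num)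
  have hinv : z * ((√7 - u) / 2) = 1 := by linear_combination h7 / 4 - hu / 4
  have hz : z ≠ 0 := left_ne_zero_of_mul_eq_one hinv
  have hz_inv : 1 / z = (√7 - u) / 2 := by rw [div_eq_iff hz]; linear_combination -hinv
  have hg : z - 1 / z = u := by rw [hz_inv]; ring
  have hg' : 1 + 1 / z ^ 2 = (7 - u * √7) / 2 := by
    rw [one_div, ← inv_pow, ← one_div, hz_inv]
    linear_combination h7 / 4 + hu / 4
  have hsq : (u * √7) ^ 2 = 21 := by rw [mul_pow, hu, h7]; norm_num
  have hcube : ((7 - u * √7) / 2) ^ 3 = 98 - 21 * (u * √7) := by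
    linear_combination (21 - u * √7) / 8 * hsq
  obtain ⟨d₁, d₂, d₃⟩ := deriv_phase_comp_sub_inv (-1 / 8) hz
  simp only [hg, phaseDeriv_neg_one_div_eight_eq_zero hu, phaseDeriv2_eq_zero_of_sq_eq_three hu,
    phaseDeriv3_of_sq_eq_three hu, hg'] at d₁ d₂ d₃
  refine ⟨by linear_combination d₁, by linear_combination d₂, ?_⟩
  linear_combination d₃ - 3 * √3 / 16 * hcube

/-- At the transition value `ξ = −1/8`, with
`θ(x) = √3·(x − 1/x)·(−1/8 − 1/((x − 1/x)² + 1))`, the point `z_a = (√7 + √3)/2` satisfies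
`θ′(z_a) = 0`, `θ″(z_a) = 0`, `θ‴(z_a) = −16·c_a` with `c_a = (21/256)(14√3 − 9√7)`, and the
point `z_b = (√7 − √3)/2` satisfies `θ′(z_b) = 0`, `θ″(z_b) = 0`, `θ‴(z_b) = −16·c_b` with
`c_b = (21/256)(14√3 + 9√7)`. -/
theorem degenerate_saddle_third_derivative :
    let θ : ℝ → ℝ := fun x => Real.sqrt 3 * (x - 1/x) * (-(1:ℝ)/8 - 1/((x - 1/x)^2 + 1))
    let za : ℝ := (Real.sqrt 7 + Real.sqrt 3) / 2
    let zb : ℝ := (Real.sqrt 7 - Real.sqrt 3) / 2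
    let ca : ℝ := (21/256) * (14 * Real.sqrt 3 - 9 * Real.sqrt 7)
    let cb : ℝ := (21/256) * (14 * Real.sqrt 3 + 9 * Real.sqrt 7)
    (deriv θ za = 0 ∧ deriv (deriv θ) za = 0 ∧ deriv (deriv (deriv θ)) za = -16 * ca) ∧
    (deriv θ zb = 0 ∧ deriv (deriv θ) zb = 0 ∧ deriv (deriv (deriv θ)) zb = -16 * cb) := by
  intro θ za zb ca cb
  have hθ : θ = phase (-1 / 8) ∘ fun x => x - 1 / x := rfl
  have h3 : √3 ^ 2 = 3 := sq_sqrt (by norm_num)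
  obtain ⟨d₁a, d₂a, d₃a⟩ := deriv_phase_at_degenerate_saddle h3
  obtain ⟨d₁b, d₂b, d₃b⟩ := deriv_phase_at_degenerate_saddle (u := -√3) (by rwa [neg_sq])
  rw [← sub_eq_add_neg] at d₁b d₂b d₃b
  rw [hθ]
  refine ⟨⟨d₁a, d₂a, d₃a.trans ?_⟩, d₁b, d₂b, d₃b.trans ?_⟩
  · linear_combination (63 / 16 * √7) * h3
  · linear_combination (-63 / 16 * √7) * h3
end
end

section
/- There is a constant C > 0 such that for all t > 0 and all y ∈ ℝ, ∫₀^∞ |v − y|^{−1/2} · v^{−1/4} · e^{−t v³} dv ≤ C · t^{−1/12}. -/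
open Real MeasureTheory Set

/-!
For negative exponents `p`, `q` one has `a ^ p * b ^ q ≤ a ^ (p + q) + b ^ (p + q)` (compare with
the smaller of `a`, `b`), so the integrand is at most
`(|v - y| ^ (p + q) + v ^ (p + q)) * exp (-t * v ^ n)`. Cutting `|v - y| ^ (p + q)` at height
`R ^ (p + q)`, the part with `|v - y| ≤ R` is integrated against `exp ≤ 1` and gives
`2 R ^ (p + q + 1) / (p + q + 1)` uniformly in `y`, while the rest and the `v ^ (p + q)` term are
Gamma integrals. With `R = t ^ (-1 / n)` all three contributions scale like
`t ^ (-(p + q + 1) / n)`.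
-/

lemma rpow_mul_rpow_le_rpow_add_add_rpow_add {a b p q : ℝ} (ha : 0 ≤ a) (hb : 0 ≤ b)
    (hp : p < 0) (hq : q < 0) : a ^ p * b ^ q ≤ a ^ (p + q) + b ^ (p + q) := by
  wlog hab : a ≤ b generalizing a b p q
  · rw [mul_comm, add_comm p q, add_comm (a ^ _)]
    exact this hb ha hq hp (le_of_not_ge hab)
  rcases ha.eq_or_lt with rfl | ha
  · rw [zero_rpow hp.ne, zero_mul]
    positivity
  calc a ^ p * b ^ q ≤ a ^ p * a ^ q :=
        mul_le_mul_of_nonneg_left (rpow_le_rpow_of_nonpos ha hab hq.le) (by positivity)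
    _ = a ^ (p + q) := (rpow_add ha p q).symm
    _ ≤ a ^ (p + q) + b ^ (p + q) := le_add_of_nonneg_right (by positivity)

lemma abs_rpow_le_indicator_add_rpow {R s : ℝ} (hR : 0 < R) (hs : s ≤ 0) (u : ℝ) :
    |u| ^ s ≤ (Icc (-R) R).indicator (fun u => |u| ^ s) u + R ^ s := by
  by_cases hu : u ∈ Icc (-R) R
  · rw [indicator_of_mem hu]
    exact le_add_of_nonneg_right (by positivity)
  · rw [indicator_of_notMem hu, zero_add]
    rw [mem_Icc, ← abs_le, not_le] at hu
    exact rpow_le_rpow_of_nonpos hR hu.le hs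

lemma intervalIntegrable_abs_rpow {s : ℝ} (hs : -1 < s) (a b : ℝ) :
    IntervalIntegrable (fun x => |x| ^ s) volume a b := by
  have from_zero {c : ℝ} (hc : 0 ≤ c) : IntervalIntegrable (fun x => |x| ^ s) volume 0 c :=
    (intervalIntegral.intervalIntegrable_rpow' hs).congr fun x hx => by
      rw [uIoc_of_le hc] at hx
      simp only [abs_of_pos hx.1]
  have to_any (c : ℝ) : IntervalIntegrable (fun x => |x| ^ s) volume 0 c := by
    rcases le_total 0 c with hc | hc
    · exact from_zero hc
    · simpa only [zero_sub, abs_neg, neg_neg, sub_zero] using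
        (from_zero (neg_nonneg.mpr hc)).comp_sub_left 0
  exact (to_any a).symm.trans (to_any b)

lemma intervalIntegral_abs_rpow {s R : ℝ} (hs : -1 < s) (hR : 0 ≤ R) :
    ∫ x in (-R)..R, |x| ^ s = 2 * (R ^ (s + 1) / (s + 1)) := by
  have hsymm : ∫ x in (-R)..0, |x| ^ s = ∫ x in (0)..R, |x| ^ s := by
    simpa only [abs_neg, neg_zero] using
      (intervalIntegral.integral_comp_neg (a := 0) (b := R) fun x => |x| ^ s).symm
  have hpos : ∫ x in (0)..R, |x| ^ s = ∫ x in (0)..R, x ^ s :=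
    intervalIntegral.integral_congr fun x hx => by
      rw [uIcc_of_le hR] at hx
      rw [abs_of_nonneg hx.1]
  rw [← intervalIntegral.integral_add_adjacent_intervals (intervalIntegrable_abs_rpow hs _ _)
    (intervalIntegrable_abs_rpow hs _ _), hsymm, hpos,
    integral_rpow (Or.inl hs), zero_rpow (by linarith), sub_zero]
  ring

lemma integrable_indicator_Icc_abs_rpow {s R : ℝ} (hs : -1 < s) (hR : 0 ≤ R) :
    Integrable ((Icc (-R) R).indicator fun u : ℝ => |u| ^ s) :=
  ((intervalIntegrable_iff_integrableOn_Icc_of_le (by linarith)).mp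
    (intervalIntegrable_abs_rpow hs (-R) R)).integrable_indicator measurableSet_Icc

lemma integral_indicator_Icc_abs_rpow {s R : ℝ} (hs : -1 < s) (hR : 0 ≤ R) :
    ∫ u, (Icc (-R) R).indicator (fun u : ℝ => |u| ^ s) u = 2 * (R ^ (s + 1) / (s + 1)) := by
  rw [integral_indicator measurableSet_Icc, integral_Icc_eq_integral_Ioc,
    ← intervalIntegral.integral_of_le (by linarith), intervalIntegral_abs_rpow hs hR]

lemma integrableOn_rpow_mul_exp_neg_mul_pow {q b : ℝ} {n : ℕ} (hq : -1 < q) (hn : 0 < n)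
    (hb : 0 < b) : IntegrableOn (fun x : ℝ => x ^ q * exp (-b * x ^ n)) (Ioi 0) := by
  simpa only [rpow_natCast] using
    integrableOn_rpow_mul_exp_neg_mul_rpow hq (Nat.cast_pos.mpr hn) hb

lemma integral_rpow_mul_exp_neg_mul_pow {q b : ℝ} {n : ℕ} (hq : -1 < q) (hn : 0 < n)
    (hb : 0 < b) : ∫ x in Ioi (0 : ℝ), x ^ q * exp (-b * x ^ n) =
      b ^ (-(q + 1) / n) * (1 / n) * Gamma ((q + 1) / n) := by
  simpa only [rpow_natCast] using
    integral_rpow_mul_exp_neg_mul_rpow (Nat.cast_pos.mpr hn) hq hb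

section

variable {p q t : ℝ} {n : ℕ}

lemma abs_sub_rpow_mul_rpow_mul_exp_le {R : ℝ} (hR : 0 < R) (hp : p < 0) (hq : q < 0)
    (ht : 0 ≤ t) (y : ℝ) {v : ℝ} (hv : 0 < v) :
    |v - y| ^ p * v ^ q * exp (-t * v ^ n) ≤
      (Icc (-R) R).indicator (fun u => |u| ^ (p + q)) (v - y) + R ^ (p + q) * exp (-t * v ^ n)
        + v ^ (p + q) * exp (-t * v ^ n) := by
  have hE : exp (-t * v ^ n) ≤ 1 := exp_le_one_iff.mpr (by nlinarith [pow_pos hv n])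
  have hK : 0 ≤ (Icc (-R) R).indicator (fun u => |u| ^ (p + q)) (v - y) :=
    indicator_nonneg (fun u _ => by positivity) _
  calc |v - y| ^ p * v ^ q * exp (-t * v ^ n)
      ≤ (|v - y| ^ (p + q) + v ^ (p + q)) * exp (-t * v ^ n) := by
        gcongr
        exact rpow_mul_rpow_le_rpow_add_add_rpow_add (abs_nonneg _) hv.le hp hq
    _ ≤ ((Icc (-R) R).indicator (fun u => |u| ^ (p + q)) (v - y) + R ^ (p + q) + v ^ (p + q))
          * exp (-t * v ^ n) := by
        gcongr
        exact abs_rpow_le_indicator_add_rpow hR (by linarith) _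
    _ ≤ _ := by nlinarith [exp_pos (-t * v ^ n)]

lemma integral_abs_sub_rpow_mul_rpow_mul_exp_le_of_cutoff {R : ℝ} (hR : 0 < R) (hp : p < 0)
    (hq : q < 0) (hpq : -1 < p + q) (hn : 0 < n) (ht : 0 < t) (y : ℝ) :
    ∫ v in Ioi 0, |v - y| ^ p * v ^ q * exp (-t * v ^ n) ≤
      2 * (R ^ (p + q + 1) / (p + q + 1))
        + R ^ (p + q) * (t ^ (-1 / n : ℝ) * (1 / n) * Gamma (1 / n))
        + t ^ (-(p + q + 1) / n) * (1 / n) * Gamma ((p + q + 1) / n) := by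
  set K := (Icc (-R) R).indicator fun u => |u| ^ (p + q)
  have hK : Integrable fun v => K (v - y) :=
    (integrable_indicator_Icc_abs_rpow hpq hR.le).comp_sub_right y
  have hexp : IntegrableOn (fun v : ℝ => exp (-t * v ^ n)) (Ioi 0) := by
    simpa only [rpow_zero, one_mul] using
      integrableOn_rpow_mul_exp_neg_mul_pow (q := 0) (by norm_num) hn ht
  have hexp_int :
      ∫ v in Ioi (0 : ℝ), exp (-t * v ^ n) = t ^ (-1 / n : ℝ) * (1 / n) * Gamma (1 / n) := by
    simpa only [rpow_zero, one_mul, zero_add] using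
      integral_rpow_mul_exp_neg_mul_pow (q := 0) (by norm_num) hn ht
  have hpow := integrableOn_rpow_mul_exp_neg_mul_pow hpq hn ht
  have hKexp : IntegrableOn (fun v => K (v - y) + R ^ (p + q) * exp (-t * v ^ n)) (Ioi 0) :=
    hK.integrableOn.add (hexp.const_mul _)
  have hK_int : ∫ v in Ioi 0, K (v - y) ≤ 2 * (R ^ (p + q + 1) / (p + q + 1)) := by
    have hK_nonneg (v : ℝ) : 0 ≤ K (v - y) := indicator_nonneg (fun u _ => by positivity) _
    calc ∫ v in Ioi 0, K (v - y) ≤ ∫ v, K (v - y) :=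
          setIntegral_le_integral hK (.of_forall hK_nonneg)
      _ = _ := by rw [integral_sub_right_eq_self K y, integral_indicator_Icc_abs_rpow hpq hR.le]
  calc ∫ v in Ioi 0, |v - y| ^ p * v ^ q * exp (-t * v ^ n)
      ≤ ∫ v in Ioi 0,
          (K (v - y) + R ^ (p + q) * exp (-t * v ^ n) + v ^ (p + q) * exp (-t * v ^ n)) :=
        setIntegral_mono_of_nonneg (fun v (hv : 0 < v) => by positivity)
          (fun v hv => abs_sub_rpow_mul_rpow_mul_exp_le hR hp hq ht.le y hv)
          (hKexp.add hpow)
      _ = (∫ v in Ioi 0, K (v - y)) + R ^ (p + q) * (∫ v in Ioi (0 : ℝ), exp (-t * v ^ n))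
          + ∫ v in Ioi 0, v ^ (p + q) * exp (-t * v ^ n) := by
        rw [integral_add hKexp hpow, integral_add hK.integrableOn (hexp.const_mul _),
          integral_const_mul]
      _ ≤ _ := by
        rw [hexp_int, integral_rpow_mul_exp_neg_mul_pow hpq hn ht]
        linarith

theorem integral_abs_sub_rpow_mul_rpow_mul_exp_le (hp : p < 0) (hq : q < 0) (hpq : -1 < p + q)
    (hn : 0 < n) (ht : 0 < t) (y : ℝ) :
    ∫ v in Ioi 0, |v - y| ^ p * v ^ q * exp (-t * v ^ n) ≤
      (2 / (p + q + 1) + Gamma (1 / n) / n + Gamma ((p + q + 1) / n) / n)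
        * t ^ (-(p + q + 1) / n) := by
  have hcut := integral_abs_sub_rpow_mul_rpow_mul_exp_le_of_cutoff (R := t ^ (-1 / n : ℝ))
    (rpow_pos_of_pos ht _) hp hq hpq hn ht y
  have h1 : (t ^ (-1 / n : ℝ)) ^ (p + q + 1) = t ^ (-(p + q + 1) / n) := by
    rw [← rpow_mul ht.le]; congr 1; field_simp
  have h2 : (t ^ (-1 / n : ℝ)) ^ (p + q) * t ^ (-1 / n : ℝ) = t ^ (-(p + q + 1) / n) := by
    rw [← rpow_mul ht.le, ← rpow_add ht]; congr 1; field_simp; ring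
  refine hcut.trans_eq ?_
  rw [h1]
  linear_combination Gamma (1 / n) / n * h2

end

/-- There is `C > 0` such that for all `t > 0` and all `y ∈ ℝ`,
`∫₀^∞ |v − y|^{−1/2} v^{−1/4} e^{−tv³} dv ≤ C · t^{−1/12}`. -/
theorem dbar_vertical_integral_bound :
    ∃ C > (0:ℝ), ∀ t : ℝ, 0 < t → ∀ y : ℝ,
      (∫ v in Set.Ioi (0:ℝ),
          |v - y| ^ (-(1:ℝ)/2) * v ^ (-(1:ℝ)/4) * Real.exp (-t * v^3))
        ≤ C * t ^ (-(1:ℝ)/12) := by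
  refine ⟨8 + Gamma (1 / 3) / 3 + Gamma (1 / 12) / 3, by positivity, fun t ht y => ?_⟩
  convert integral_abs_sub_rpow_mul_rpow_mul_exp_le (p := -1 / 2) (q := -1 / 4) (n := 3)
    (by norm_num) (by norm_num) (by norm_num) (by norm_num) ht y using 2 <;> norm_num
end

section
/- Let p ∈ ℝ, φ₀ ∈ (0, π/2), let r̃ : ℝ → ℂ be differentiable with derivative r̃′ ∈ L²(ℝ), and let X : ℝ → ℝ be differentiable with 0 ≤ X ≤ 1. On the open sector Ω = {z ∈ ℂ : 0 < arg(z − p) < φ₀} define R(z) = (1 − X(Re z))·(r̃(Re z) − r̃(p))·cos((π/(2φ₀))·arg(z − p)) + r̃(p). Then R, viewed as a function of (Re z, Im z), is differentiable on Ω, and its ∂̄-derivative ∂̄R := (∂_x R + i ∂_y R)/2 satisfies, for all z ∈ Ω, |∂̄R(z)| ≤ (1/2)|r̃′(Re z)| + (1/2)|X′(Re z)|·|r̃(Re z) − r̃(p)| + (π/(4φ₀))·‖r̃′‖_{L²(ℝ)}·|z − p|^{−1/2}. -/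
/-!
Write `R(z) = A(Re z) · cos(c · arg(z - p)) + r̃(p)` with `A = (1 - X)(r̃ - r̃(p))` and
`c = π / (2φ₀)`. The operator `∂̄` is a derivation, `∂̄(g ∘ Re) = g' / 2`, and since `arg` is the
imaginary part of the holomorphic `log`, `|∂̄ arg(z - p)| = 1 / (2|z - p|)` off the slit. Hence
`|∂̄R| ≤ |A'| / 2 + (c / 2) |A| / |z - p|`. Finally `|A| ≤ |r̃(Re z) - r̃(p)|`, which by the
fundamental theorem of calculus and Hölder is at most `‖r̃'‖₂ |Re z - p|^{1/2} ≤ ‖r̃'‖₂ |z - p|^{1/2}`.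
-/

open Real Complex MeasureTheory
open ComplexConjugate

noncomputable def dbar (f : ℂ → ℂ) (z : ℂ) : ℂ :=
  (fderiv ℝ f z 1 + I * fderiv ℝ f z I) / 2

section Dbar

variable {f g : ℂ → ℂ} {z : ℂ}

theorem dbar_add_const (b : ℂ) : dbar (fun w => f w + b) z = dbar f z := by
  simp only [dbar, fderiv_add_const]

theorem dbar_mul (hf : DifferentiableAt ℝ f z) (hg : DifferentiableAt ℝ g z) :
    dbar (fun w => f w * g w) z = f z * dbar g z + g z * dbar f z := by
  have hfg : HasFDerivAt (fun w => f w * g w) (f z • fderiv ℝ g z + g z • fderiv ℝ f z) z :=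
    hf.hasFDerivAt.mul hg.hasFDerivAt
  rw [dbar, hfg.fderiv, dbar, dbar]
  simp only [add_apply, smul_apply, smul_eq_mul]
  ring

theorem dbar_comp_ofReal {h : ℝ → ℂ} {u : ℂ → ℝ} (hh : DifferentiableAt ℝ h (u z))
    (hu : DifferentiableAt ℝ u z) :
    dbar (fun w => h (u w)) z = deriv h (u z) * dbar (fun w => (u w : ℂ)) z := by
  have hcomp : HasFDerivAt (fun w => h (u w))
      ((ContinuousLinearMap.toSpanSingleton ℝ (deriv h (u z))).comp (fderiv ℝ u z)) z :=
    hh.hasDerivAt.hasFDerivAt.comp z hu.hasFDerivAt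
  have hcast : HasFDerivAt (fun w => (u w : ℂ)) (ofRealCLM.comp (fderiv ℝ u z)) z :=
    ofRealCLM.hasFDerivAt.comp z hu.hasFDerivAt
  simp only [dbar, hcomp.fderiv, hcast.fderiv, ContinuousLinearMap.comp_apply,
    ContinuousLinearMap.toSpanSingleton_apply, real_smul, ofRealCLM_apply]
  ring

theorem dbar_comp_re {h : ℝ → ℂ} (hh : DifferentiableAt ℝ h z.re) :
    dbar (fun w => h w.re) z = deriv h z.re / 2 := by
  have hre : HasFDerivAt (fun w : ℂ => (w.re : ℂ)) (ofRealCLM.comp reCLM) z :=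
    (ofRealCLM.comp reCLM).hasFDerivAt
  rw [dbar_comp_ofReal (u := re) hh reCLM.differentiableAt, dbar, hre.fderiv]
  simp only [ContinuousLinearMap.comp_apply, reCLM_apply, ofRealCLM_apply, one_re, I_re,
    ofReal_one, ofReal_zero]
  ring

theorem dbar_ofReal_im_of_hasDerivAt {h' : ℂ} (hf : HasDerivAt f h' z) :
    dbar (fun w => ((f w).im : ℂ)) z = I * conj h' / 2 := by
  have him : HasFDerivAt (fun w => ((f w).im : ℂ))
      ((ofRealCLM.comp imCLM).comp
        ((ContinuousLinearMap.toSpanSingleton ℂ h').restrictScalars ℝ)) z :=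
    (ofRealCLM.comp imCLM).hasFDerivAt.comp z (hf.hasFDerivAt.restrictScalars ℝ)
  rw [dbar, him.fderiv]
  apply Complex.ext <;> simp

end Dbar

section Sector

variable {A : ℝ → ℂ} {c : ℝ} {p b z : ℂ}

theorem hasDerivAt_log_sub (hz : z - p ∈ slitPlane) :
    HasDerivAt (fun w => log (w - p)) (z - p)⁻¹ z := by
  simpa using ((hasDerivAt_id z).sub_const p).clog hz

theorem differentiableAt_arg_sub (hz : z - p ∈ slitPlane) :
    DifferentiableAt ℝ (fun w => arg (w - p)) z := by
  simp_rw [← log_im]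
  exact imCLM.differentiableAt.comp z
    ((hasDerivAt_log_sub hz).differentiableAt.restrictScalars ℝ)

theorem norm_dbar_arg_sub (hz : z - p ∈ slitPlane) :
    ‖dbar (fun w => (arg (w - p) : ℂ)) z‖ = ‖z - p‖⁻¹ / 2 := by
  simp_rw [← log_im]
  rw [dbar_ofReal_im_of_hasDerivAt (hasDerivAt_log_sub hz)]
  simp [-map_sub]

theorem hasDerivAt_ofReal_cos_mul (t : ℝ) :
    HasDerivAt (fun s => (Real.cos (c * s) : ℂ)) (-(Real.sin (c * t) * c : ℝ)) t := by
  simpa using (((hasDerivAt_id t).const_mul c).cos).ofReal_comp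

theorem differentiableAt_mul_cos_arg_add (hA : DifferentiableAt ℝ A z.re)
    (hz : z - p ∈ slitPlane) :
    DifferentiableAt ℝ (fun w => A w.re * (Real.cos (c * arg (w - p)) : ℂ) + b) z :=
  ((hA.comp z reCLM.differentiableAt).mul
    ((hasDerivAt_ofReal_cos_mul _).differentiableAt.comp z
      (differentiableAt_arg_sub hz))).add_const b

theorem norm_dbar_mul_cos_arg_add_le (hA : DifferentiableAt ℝ A z.re) (hz : z - p ∈ slitPlane) :
    ‖dbar (fun w => A w.re * (Real.cos (c * arg (w - p)) : ℂ) + b) z‖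
      ≤ ‖deriv A z.re‖ / 2 + |c| * ‖A z.re‖ * ‖z - p‖⁻¹ / 2 := by
  have hcos := hasDerivAt_ofReal_cos_mul (c := c) (arg (z - p))
  have hAre : DifferentiableAt ℝ (fun w : ℂ => A w.re) z := hA.comp z reCLM.differentiableAt
  have hcosarg : DifferentiableAt ℝ (fun w => (Real.cos (c * arg (w - p)) : ℂ)) z :=
    hcos.differentiableAt.comp z (differentiableAt_arg_sub hz)
  rw [dbar_add_const, dbar_mul hAre hcosarg, dbar_comp_re hA,
    dbar_comp_ofReal (u := fun w => arg (w - p)) hcos.differentiableAt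
      (differentiableAt_arg_sub hz),
    hcos.deriv]
  calc _ ≤ ‖A z.re‖ * (|c| * (‖z - p‖⁻¹ / 2)) + 1 * (‖deriv A z.re‖ / 2) := by
        refine (norm_add_le _ _).trans ?_
        simp only [norm_mul, norm_div, norm_real, Real.norm_eq_abs, norm_neg,
          norm_dbar_arg_sub hz, RCLike.norm_ofNat]
        gcongr
        · exact mul_le_of_le_one_left (abs_nonneg c) (abs_sin_le_one _)
        · exact abs_cos_le_one _
    _ = _ := by ring

end Sector

section Holder

variable {E : Type*} [NormedAddCommGroup E] {f : ℝ → E}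

theorem eLpNorm_one_restrict_uIoc_le {a b : ℝ} (hf : AEStronglyMeasurable f volume) :
    eLpNorm f 1 (volume.restrict (Set.uIoc a b))
      ≤ eLpNorm f 2 volume * ENNReal.ofReal |b - a| ^ (1 / 2 : ℝ) := by
  have hvol : volume.restrict (Set.uIoc a b) Set.univ = ENNReal.ofReal |b - a| := by
    rw [Measure.restrict_apply_univ, Set.uIoc, Real.volume_Ioc, max_sub_min_eq_abs]
  calc eLpNorm f 1 (volume.restrict (Set.uIoc a b))
      ≤ eLpNorm f 2 (volume.restrict (Set.uIoc a b)) *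
          volume.restrict (Set.uIoc a b) Set.univ
            ^ (1 / (1 : ENNReal).toReal - 1 / (2 : ENNReal).toReal) :=
        eLpNorm_le_eLpNorm_mul_rpow_measure_univ one_le_two hf.restrict
    _ ≤ _ := by
        rw [hvol, show 1 / (1 : ENNReal).toReal - 1 / (2 : ENNReal).toReal = (1 / 2 : ℝ) by
          norm_num]
        exact mul_le_mul_left (eLpNorm_restrict_le _ _ _ _) _

theorem norm_sub_le_eLpNorm_deriv_mul_rpow [NormedSpace ℝ E] [CompleteSpace E] (hf : Differentiable ℝ f) (hf' : MemLp (deriv f) 2 volume)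
    (a b : ℝ) :
    ‖f b - f a‖ ≤ (eLpNorm (deriv f) 2 volume).toReal * |b - a| ^ (1 / 2 : ℝ) := by
  have hbound := eLpNorm_one_restrict_uIoc_le (a := a) (b := b) hf'.1
  have hfin : eLpNorm (deriv f) 2 volume * ENNReal.ofReal |b - a| ^ (1 / 2 : ℝ) ≠ ⊤ :=
    ENNReal.mul_ne_top hf'.2.ne
      (ENNReal.rpow_ne_top_of_nonneg (by norm_num) ENNReal.ofReal_ne_top)
  have hint : IntegrableOn (deriv f) (Set.uIoc a b) :=
    memLp_one_iff_integrable.mp ⟨hf'.1.restrict, hbound.trans_lt hfin.lt_top⟩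
  calc ‖f b - f a‖ = ‖∫ t in a..b, deriv f t‖ := by
        rw [intervalIntegral.integral_deriv_eq_sub (fun t _ => hf t)
          ((intervalIntegrable_iff).mpr hint)]
    _ ≤ ∫ t in Set.uIoc a b, ‖deriv f t‖ := intervalIntegral.norm_integral_le_integral_norm_uIoc
    _ = (eLpNorm (deriv f) 1 (volume.restrict (Set.uIoc a b))).toReal := by
        rw [eLpNorm_one_eq_lintegral_enorm, integral_norm_eq_lintegral_enorm hf'.1.restrict]
    _ ≤ _ := ENNReal.toReal_mono hfin hbound
    _ = _ := by
        rw [ENNReal.toReal_mul, ← ENNReal.toReal_rpow, ENNReal.toReal_ofReal (abs_nonneg _)]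

end Holder

theorem norm_one_sub_ofReal_le_one {t : ℝ} (h0 : 0 ≤ t) (h1 : t ≤ 1) : ‖1 - (t : ℂ)‖ ≤ 1 := by
  rw [← ofReal_one, ← ofReal_sub, norm_real, Real.norm_eq_abs, abs_le]
  constructor <;> linarith

theorem norm_deriv_one_sub_ofReal_mul_le {χ : ℝ → ℝ} {g : ℝ → ℂ} {x : ℝ}
    (hχ : DifferentiableAt ℝ χ x) (hg : DifferentiableAt ℝ g x) (h0 : 0 ≤ χ x) (h1 : χ x ≤ 1) :
    ‖deriv (fun y => (1 - (χ y : ℂ)) * g y) x‖ ≤ ‖deriv g x‖ + |deriv χ x| * ‖g x‖ := by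
  have hχ' : HasDerivAt (fun y => 1 - (χ y : ℂ)) (-((deriv χ x : ℝ) : ℂ)) x := by
    simpa using hχ.hasDerivAt.ofReal_comp.const_sub 1
  rw [(hχ'.fun_mul hg.hasDerivAt).deriv]
  calc _ ≤ ‖-((deriv χ x : ℝ) : ℂ)‖ * ‖g x‖ + ‖1 - (χ x : ℂ)‖ * ‖deriv g x‖ := by
        refine (norm_add_le _ _).trans ?_
        rw [norm_mul, norm_mul]
    _ ≤ |deriv χ x| * ‖g x‖ + 1 * ‖deriv g x‖ := by
        rw [norm_neg, norm_real, Real.norm_eq_abs]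
        gcongr
        exact norm_one_sub_ofReal_le_one h0 h1
    _ = _ := by ring

theorem rpow_one_half_mul_inv {x : ℝ} (hx : 0 < x) :
    x ^ (1 / 2 : ℝ) * x⁻¹ = x ^ (-(1 : ℝ) / 2) := by
  rw [← rpow_neg_one, ← rpow_add hx]
  norm_num

/-- ∂̄-extension estimate.  Let `p ∈ ℝ`, `φ₀ ∈ (0, π/2)`, `r̃ : ℝ → ℂ` differentiable with
`r̃′ ∈ L²(ℝ)`, and `X : ℝ → ℝ` differentiable with `0 ≤ X ≤ 1`.  On the open sector
`Ω = {z : 0 < arg(z − p) < φ₀}` define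
`R(z) = (1 − X(Re z))(r̃(Re z) − r̃(p))cos((π/(2φ₀))arg(z − p)) + r̃(p)`.
Then `R` is (real-)differentiable on `Ω`, and its ∂̄-derivative
`∂̄R = (∂_x R + i∂_y R)/2` satisfies, for all `z ∈ Ω`,
`|∂̄R(z)| ≤ (1/2)|r̃′(Re z)| + (1/2)|X′(Re z)||r̃(Re z) − r̃(p)|
  + (π/(4φ₀))‖r̃′‖_{L²}|z − p|^{−1/2}`. -/
theorem dbar_extension_estimate (p φ₀ : ℝ) (hφ₀ : φ₀ ∈ Set.Ioo 0 (Real.pi / 2))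
    (r : ℝ → ℂ) (hr : Differentiable ℝ r)
    (hr2 : MemLp (deriv r) 2 (volume : Measure ℝ))
    (X : ℝ → ℝ) (hX : Differentiable ℝ X)
    (hX0 : ∀ x : ℝ, 0 ≤ X x) (hX1 : ∀ x : ℝ, X x ≤ 1) :
    let Ω : Set ℂ := {z : ℂ | 0 < Complex.arg (z - p) ∧ Complex.arg (z - p) < φ₀}
    let R : ℂ → ℂ := fun z =>
      (1 - (X z.re : ℂ)) * (r z.re - r p) *
        ((Real.cos ((Real.pi / (2 * φ₀)) * Complex.arg (z - p)) : ℝ) : ℂ) + r p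
    ∀ z ∈ Ω, DifferentiableAt ℝ R z ∧
      ‖(fderiv ℝ R z 1 + Complex.I * fderiv ℝ R z Complex.I) / 2‖
        ≤ (1/2) * ‖deriv r z.re‖ + (1/2) * |deriv X z.re| * ‖r z.re - r p‖
          + (Real.pi / (4 * φ₀)) * (eLpNorm (deriv r) 2 (volume : Measure ℝ)).toReal
            * ‖z - p‖ ^ (-(1:ℝ)/2) := by
  intro Ω R z ⟨harg_pos, harg_lt⟩
  have hslit : z - p ∈ slitPlane := mem_slitPlane_iff_arg.mpr
    ⟨(harg_lt.trans (hφ₀.2.trans (by linarith [pi_pos]))).ne, fun h => by simp [h] at harg_pos⟩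
  set A : ℝ → ℂ := fun x => (1 - (X x : ℂ)) * (r x - r p)
  have hA : DifferentiableAt ℝ A z.re :=
    ((differentiableAt_const 1).sub (hX z.re).hasDerivAt.ofReal_comp.differentiableAt).mul
      ((hr z.re).sub_const (r p))
  refine ⟨differentiableAt_mul_cos_arg_add hA hslit,
    (norm_dbar_mul_cos_arg_add_le hA hslit).trans ?_⟩
  have hdA : ‖deriv A z.re‖ ≤ ‖deriv r z.re‖ + |deriv X z.re| * ‖r z.re - r p‖ := by
    simpa using norm_deriv_one_sub_ofReal_mul_le (hX z.re) ((hr z.re).sub_const (r p))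
      (hX0 z.re) (hX1 z.re)
  have hAz : ‖A z.re‖ ≤ (eLpNorm (deriv r) 2 volume).toReal * ‖z - p‖ ^ (1 / 2 : ℝ) :=
    calc ‖A z.re‖ ≤ ‖r z.re - r p‖ := (norm_mul _ _).trans_le
          (mul_le_of_le_one_left (norm_nonneg _) (norm_one_sub_ofReal_le_one (hX0 _) (hX1 _)))
      _ ≤ _ := (norm_sub_le_eLpNorm_deriv_mul_rpow hr hr2 p z.re).trans
          (by gcongr; simpa using abs_re_le_norm (z - p))
  have hc : 0 < π / (2 * φ₀) := div_pos pi_pos (by linarith [hφ₀.1])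
  calc _ ≤ (‖deriv r z.re‖ + |deriv X z.re| * ‖r z.re - r p‖) / 2
        + π / (2 * φ₀) * ((eLpNorm (deriv r) 2 volume).toReal * ‖z - p‖ ^ (1 / 2 : ℝ))
          * ‖z - p‖⁻¹ / 2 := by
        rw [abs_of_pos hc]
        gcongr
    _ = _ := by
        rw [← rpow_one_half_mul_inv (norm_pos_iff.mpr (slitPlane_ne_zero hslit))]
        ring
end
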